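/- Let V be a finite-dimensional complex vector space, G a finite group acting linearly on V, and for v ∈ V let G_v be its stabilizer. Define rk v = (1/2)(dim V − dim V^{G_v}). If G preserves a non-degenerate alternating form on V, then rk v is a non-negative integer for every v ∈ V. -/

import Mathlib

/-!
The stabilizer `G_v` is a finite group of symplectic automorphisms, and averaging over it shows
that `Ω` stays non-degenerate on the fixed space `F = V^{G_v}`. Hence `V = F ⊕ F^⊥` with `Ω`
non-degenerate and alternating on `F^⊥`, and a space carrying such a form has even dimension,
because its Gram matrix `M` satisfies `det M = det (-Mᵀ) = (-1)^{dim} det M`.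
-/

open Module Matrix

namespace LinearMap.BilinForm

variable {K V : Type*} [Field K] [AddCommGroup V] [Module K V]

theorem IsAlt.even_finrank [FiniteDimensional K V] (hK : ringChar K ≠ 2)
    {B : LinearMap.BilinForm K V} (hB : B.IsAlt) (hnd : B.Nondegenerate) : Even (finrank K V) := by
  let b := Module.finBasis K V
  set M := LinearMap.BilinForm.toMatrix b B
  have hdet : M.det ≠ 0 := (nondegenerate_iff_det_ne_zero b).mp hnd
  have hskew : -Mᵀ = M := by
    ext i j
    exact hB.neg_eq _ _
  have hsign : (-1 : K) ^ finrank K V = 1 := by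
    refine mul_right_cancel₀ hdet ?_
    calc (-1 : K) ^ finrank K V * M.det = (-Mᵀ).det := by
          rw [Matrix.det_neg, Matrix.det_transpose, Fintype.card_fin]
      _ = 1 * M.det := by rw [hskew, one_mul]
  exact (neg_one_pow_eq_one_iff_even (Ring.neg_one_ne_one_of_char_ne_two hK)).mp hsign

theorem restrict_orthogonal_nondegenerate [FiniteDimensional K V] {B : LinearMap.BilinForm K V}
    (hnd : B.Nondegenerate) (hrefl : B.IsRefl) {W : Submodule K V}
    (hW : (B.restrict W).Nondegenerate) : (B.restrict (B.orthogonal W)).Nondegenerate := by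
  rw [restrict_nondegenerate_iff_isCompl_orthogonal hrefl, orthogonal_orthogonal hnd hrefl]
  exact (isCompl_orthogonal_of_restrict_nondegenerate hrefl hW).symm

theorem exists_finrank_eq_add_two_mul_of_restrict_nondegenerate [FiniteDimensional K V]
    (hK : ringChar K ≠ 2) {B : LinearMap.BilinForm K V} (hB : B.IsAlt) (hnd : B.Nondegenerate)
    {W : Submodule K V} (hW : (B.restrict W).Nondegenerate) :
    ∃ m : ℕ, finrank K V = finrank K W + 2 * m := by
  have hrefl : B.IsRefl := hB.isRefl
  have hWperp : (B.restrict (B.orthogonal W)).Nondegenerate :=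
    restrict_orthogonal_nondegenerate hnd hrefl hW
  obtain ⟨m, hm⟩ :=
    IsAlt.even_finrank (B := B.restrict (B.orthogonal W)) hK (fun x => hB x) hWperp
  refine ⟨m, ?_⟩
  have hdim := Submodule.finrank_add_eq_of_isCompl
    (isCompl_orthogonal_of_restrict_nondegenerate hrefl hW)
  omega

/-- Averaging over `H` projects onto `W`, and `B x` is constant on the `H`-orbit of `w` when `x`
is fixed, so `B x (∑ h, h w) = |H| • B x w`. -/
theorem restrict_nondegenerate_of_fixed {H : Subgroup (V ≃ₗ[K] V)} [Finite H]
    (hH : (Nat.card H : K) ≠ 0) {B : LinearMap.BilinForm K V} (hrefl : B.IsRefl)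
    (hsep : B.SeparatingLeft) (hinv : ∀ h ∈ H, ∀ x y : V, B (h x) (h y) = B x y)
    {W : Submodule K V} (hW : ∀ w : V, w ∈ W ↔ ∀ h ∈ H, h w = w) :
    (B.restrict W).Nondegenerate := by
  have := Fintype.ofFinite H
  refine (IsRefl.nondegenerate_iff_separatingLeft (B := B.restrict W)
    (fun x y => hrefl x y)).mpr ?_
  rintro ⟨x, hx⟩ hxW
  have hxfix : ∀ h : H, (h : V ≃ₗ[K] V) x = x := fun h => (hW x).mp hx h h.2
  refine Subtype.ext (hsep x fun w => ?_)
  have havg_mem : ∑ h : H, (h : V ≃ₗ[K] V) w ∈ W := by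
    refine (hW _).mpr fun g hg => ?_
    rw [map_sum]
    exact Fintype.sum_bijective (⟨g, hg⟩ * ·) (Group.mulLeft_bijective _) _ _ fun _ => rfl
  have havg : B x (∑ h : H, (h : V ≃ₗ[K] V) w) = Nat.card H • B x w := by
    rw [map_sum, Nat.card_eq_fintype_card, ← Finset.card_univ, ← Finset.sum_const]
    refine Finset.sum_congr rfl fun h _ => ?_
    conv_lhs => rw [← hxfix h]
    exact hinv h h.2 x w
  have hzero : Nat.card H • B x w = 0 := havg ▸ hxW ⟨_, havg_mem⟩
  rw [nsmul_eq_mul] at hzero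
  exact (mul_eq_zero.mp hzero).resolve_left hH

end LinearMap.BilinForm

/-- If a finite group `G ⊆ GL(V)` preserves a non-degenerate alternating form on a
finite-dimensional complex vector space `V`, then for every `v ∈ V` the rank
`rk v = (1/2)(dim V − dim V^{G_v})` is a non-negative integer: there is `m : ℕ` with
`dim V = dim V^{G_v} + 2m`, where `G_v` is the stabilizer of `v`. -/
theorem stmt_10 (V : Type*) [AddCommGroup V] [Module ℂ V] [FiniteDimensional ℂ V]
    (Ω : V →ₗ[ℂ] V →ₗ[ℂ] ℂ)
    (halt : ∀ v : V, Ω v v = 0)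
    (hnd : ∀ v : V, (∀ w : V, Ω v w = 0) → v = 0)
    (G : Subgroup (V ≃ₗ[ℂ] V)) (hGfin : Finite G)
    (hinv : ∀ g ∈ G, ∀ v w : V, Ω (g v) (g w) = Ω v w) :
    ∀ v : V, ∀ F : Submodule ℂ V,
      (∀ w : V, w ∈ F ↔ ∀ g ∈ G, g v = v → g w = w) →
      ∃ m : ℕ, Module.finrank ℂ V = Module.finrank ℂ F + 2 * m := by
  intro v F hF
  have hchar : ringChar ℂ ≠ 2 := by rw [ringChar.eq_zero]; decide
  have hrefl : Ω.IsRefl := LinearMap.BilinForm.IsAlt.isRefl halt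
  let Gv := G ⊓ MulAction.stabilizer (V ≃ₗ[ℂ] V) v
  have : Finite Gv :=
    Finite.of_injective (Subgroup.inclusion inf_le_left) (Subgroup.inclusion_injective _)
  have hFfix : ∀ w : V, w ∈ F ↔ ∀ g ∈ Gv, g w = w := fun w =>
    (hF w).trans ⟨fun h g hg => h g hg.1 hg.2, fun h g hg hgv => h g ⟨hg, hgv⟩⟩
  have hFnd : (LinearMap.BilinForm.restrict Ω F).Nondegenerate :=
    LinearMap.BilinForm.restrict_nondegenerate_of_fixed
      (Nat.cast_ne_zero.mpr Nat.card_pos.ne') hrefl hnd (fun g (hg : g ∈ Gv) => hinv g hg.1) hFfix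
  exact LinearMap.BilinForm.exists_finrank_eq_add_two_mul_of_restrict_nondegenerate
    hchar halt (hrefl.nondegenerate_iff_separatingLeft.mpr hnd) hFnd
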